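/- arXiv:2111.04994 — 7 statements merged into one kernel-verified Lean document; each statement's English description precedes it below -/
import Mathlib

section
/- Let X_1,...,X_t be independent Bernoulli random variables each with success probability 1/(P-1), where P ≥ 2 and t = 2(P-1)(D + ln(1/ε)) for a positive integer D and 0 < ε < 1. Then the probability that X_1 + ... + X_t < D is at most ε. -/
/-!
Chernoff's lower-tail bound at the exponent `s = -log 2`: for a `0/1` variable with mean `p`,
`𝔼[2^{-X}] = 1 - p/2 ≤ exp(-p/2)`, so independence gives
`ℙ(∑ X_i ≤ D) ≤ 2^D · exp(-t p / 2) = 2^D · exp(-(D + log(1/ε))) = (2/e)^D · ε ≤ ε`.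
-/

open MeasureTheory ProbabilityTheory Real

lemma eq_indicator_one_of_forall_eq_zero_or_eq_one {Ω : Type*} {X : Ω → ℝ}
    (hX : ∀ ω, X ω = 0 ∨ X ω = 1) : X = {ω | X ω = 1}.indicator 1 := by
  funext ω
  rcases hX ω with h | h <;> simp [h]

lemma exp_mul_eq_of_eq_zero_or_eq_one {x : ℝ} (hx : x = 0 ∨ x = 1) (s : ℝ) :
    exp (s * x) = 1 + (exp s - 1) * x := by
  rcases hx with rfl | rfl <;> simp

section ZeroOne

variable {Ω : Type*} [MeasurableSpace Ω] {μ : Measure Ω} [IsProbabilityMeasure μ] {X : Ω → ℝ}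

lemma mgf_eq_of_forall_eq_zero_or_eq_one (hmeas : Measurable X)
    (hX : ∀ ω, X ω = 0 ∨ X ω = 1) (s : ℝ) :
    mgf X μ s = 1 + (exp s - 1) * μ.real {ω | X ω = 1} := by
  have hset : MeasurableSet {ω | X ω = 1} := hmeas (measurableSet_singleton 1)
  have hint : Integrable X μ := by
    rw [eq_indicator_one_of_forall_eq_zero_or_eq_one hX]
    exact (integrable_const 1).indicator hset
  calc mgf X μ s = ∫ ω, (1 + (exp s - 1) * X ω) ∂μ := by
        simp only [mgf, exp_mul_eq_of_eq_zero_or_eq_one (hX _)]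
    _ = 1 + (exp s - 1) * ∫ ω, X ω ∂μ := by
        rw [integral_add (integrable_const 1) (hint.const_mul _), integral_const_mul]
        simp
    _ = 1 + (exp s - 1) * μ.real {ω | X ω = 1} := by
        conv_lhs => rw [eq_indicator_one_of_forall_eq_zero_or_eq_one hX]
        rw [integral_indicator_one hset]

lemma mgf_le_exp_of_forall_eq_zero_or_eq_one (hmeas : Measurable X)
    (hX : ∀ ω, X ω = 0 ∨ X ω = 1) (s : ℝ) :
    mgf X μ s ≤ exp ((exp s - 1) * μ.real {ω | X ω = 1}) := by
  rw [mgf_eq_of_forall_eq_zero_or_eq_one hmeas hX, add_comm]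
  exact add_one_le_exp _

lemma integrable_exp_mul_of_forall_eq_zero_or_eq_one (hmeas : Measurable X)
    (hX : ∀ ω, X ω = 0 ∨ X ω = 1) (s : ℝ) :
    Integrable (fun ω => exp (s * X ω)) μ := by
  simp only [exp_mul_eq_of_eq_zero_or_eq_one (hX _)]
  rw [eq_indicator_one_of_forall_eq_zero_or_eq_one hX]
  exact (integrable_const 1).add (((integrable_const 1).indicator
    (hmeas (measurableSet_singleton 1))).const_mul _)

end ZeroOne

theorem measureReal_sum_le_le_exp_of_forall_eq_zero_or_eq_one {Ω ι : Type*} [MeasurableSpace Ω]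
    {μ : Measure Ω} [IsProbabilityMeasure μ] [Fintype ι] {X : ι → Ω → ℝ}
    (hmeas : ∀ i, Measurable (X i)) (hind : iIndepFun X μ)
    (hX : ∀ i ω, X i ω = 0 ∨ X i ω = 1) (a : ℝ) {s : ℝ} (hs : s ≤ 0) :
    μ.real {ω | ∑ i, X i ω ≤ a} ≤
      exp (-s * a + (exp s - 1) * ∑ i, μ.real {ω | X i ω = 1}) := by
  have hint : Integrable (fun ω => exp (s * (∑ i, X i) ω)) μ :=
    hind.integrable_exp_mul_sum hmeas fun i _ =>
      integrable_exp_mul_of_forall_eq_zero_or_eq_one (hmeas i) (hX i) s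
  have hmgf : mgf (∑ i, X i) μ s ≤ exp ((exp s - 1) * ∑ i, μ.real {ω | X i ω = 1}) := by
    rw [hind.mgf_sum hmeas, Finset.mul_sum, exp_sum]
    exact Finset.prod_le_prod (fun _ _ => mgf_nonneg) fun i _ =>
      mgf_le_exp_of_forall_eq_zero_or_eq_one (hmeas i) (hX i) s
  calc μ.real {ω | ∑ i, X i ω ≤ a} ≤ exp (-s * a) * mgf (∑ i, X i) μ s := by
        simpa only [Finset.sum_apply] using measure_le_le_exp_mul_mgf a hs hint
    _ ≤ exp (-s * a) * exp ((exp s - 1) * ∑ i, μ.real {ω | X i ω = 1}) := by gcongr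
    _ = _ := (exp_add _ _).symm

lemma exp_log_two_mul_sub_le {D ε : ℝ} (hD : 0 ≤ D) (hε : 0 < ε) :
    exp (log 2 * D - (D + log (1 / ε))) ≤ ε := by
  have hlog2 : log 2 ≤ 1 := by linarith [log_le_sub_one_of_pos two_pos]
  calc exp (log 2 * D - (D + log (1 / ε))) = exp (D * (log 2 - 1)) * exp (log ε) := by
        rw [← exp_add, one_div, log_inv]; ring_nf
    _ ≤ 1 * ε := by
        rw [exp_log hε]
        gcongr
        exact exp_le_one_iff.mpr (mul_nonpos_of_nonneg_of_nonpos hD (by linarith))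
    _ = ε := one_mul ε

theorem stmt0_general {Ω : Type*} [MeasureSpace Ω] [IsProbabilityMeasure (ℙ : Measure Ω)]
    (P : ℕ) (hP : 2 ≤ P) (D : ℕ) (ε : ℝ) (hε0 : 0 < ε)
    (t : ℕ) (ht : (t : ℝ) = 2 * ((P : ℝ) - 1) * ((D : ℝ) + Real.log (1 / ε)))
    (X : Fin t → Ω → ℝ) (hmeas : ∀ i, Measurable (X i))
    (hind : iIndepFun X ℙ)
    (hval : ∀ i ω, X i ω = 0 ∨ X i ω = 1)
    (hbern : ∀ i, ℙ {ω | X i ω = 1} = ENNReal.ofReal (1 / ((P : ℝ) - 1))) :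
    ℙ {ω | (∑ i, X i ω) < (D : ℝ)} ≤ ENNReal.ofReal ε := by
  have hP1 : (0 : ℝ) < P - 1 := by
    have : (2 : ℝ) ≤ P := by exact_mod_cast hP
    linarith
  have hmean : ∑ i, (ℙ : Measure Ω).real {ω | X i ω = 1} = 2 * (D + log (1 / ε)) := by
    simp only [measureReal_def, hbern, ENNReal.toReal_ofReal (one_div_pos.mpr hP1).le,
      Finset.sum_const, Finset.card_univ, Fintype.card_fin, nsmul_eq_mul, ht]
    field_simp
  have hchernoff := measureReal_sum_le_le_exp_of_forall_eq_zero_or_eq_one hmeas hind hval D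
    (neg_nonpos.mpr (log_nonneg one_le_two))
  rw [exp_neg, exp_log two_pos, hmean] at hchernoff
  calc ℙ {ω | (∑ i, X i ω) < (D : ℝ)} ≤ ℙ {ω | ∑ i, X i ω ≤ D} :=
        measure_mono (Set.ofPred_subset_ofPred.mpr fun _ => le_of_lt)
    _ ≤ ENNReal.ofReal ε := by
      rw [ENNReal.le_ofReal_iff_toReal_le (measure_ne_top _ _) hε0.le, ← measureReal_def]
      refine hchernoff.trans (le_of_eq_of_le ?_ (exp_log_two_mul_sub_le D.cast_nonneg hε0))
      congr 1
      ring

/-- Chernoff-type bound for non-overlapping steal attempts: `t = 2(P-1)(D + ln(1/ε))`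
independent Bernoulli trials, each with success probability `1/(P-1)`, yield fewer than
`D` successes with probability at most `ε`. -/
theorem stmt0 {Ω : Type*} [MeasureSpace Ω] [IsProbabilityMeasure (ℙ : Measure Ω)]
    (P : ℕ) (hP : 2 ≤ P) (D : ℕ) (hD : 0 < D) (ε : ℝ) (hε0 : 0 < ε) (hε1 : ε < 1)
    (t : ℕ) (ht : (t : ℝ) = 2 * ((P : ℝ) - 1) * ((D : ℝ) + Real.log (1 / ε)))
    (X : Fin t → Ω → ℝ) (hmeas : ∀ i, Measurable (X i))
    (hind : iIndepFun X ℙ)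
    (hval : ∀ i ω, X i ω = 0 ∨ X i ω = 1)
    (hbern : ∀ i, ℙ {ω | X i ω = 1} = ENNReal.ofReal (1 / ((P : ℝ) - 1))) :
    ℙ {ω | (∑ i, X i ω) < (D : ℝ)} ≤ ENNReal.ofReal ε :=
  stmt0_general P hP D ε hε0 t ht X hmeas hind hval hbern
end

section
/- Let Y_1,...,Y_t be independent Bernoulli random variables each with success probability at least 1 - 1/e, where t = 2(D + ln(1/ε))/(1 - 1/e) for a positive integer D and 0 < ε < 1. Then the probability that Y_1 + ... + Y_t < D is at most ε. -/
/-!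
Chernoff's method with the fixed parameter `s = -1`. A `{0,1}`-valued variable with success
probability at least `p` has `𝔼[e^{-Y}] = 1 - (1 - 1/e) ℙ(Y = 1) ≤ exp (-(1 - 1/e) p)`, so for
`p = q := 1 - 1/e` independence gives `ℙ(∑ Y ≤ D) ≤ e^D · exp (-q² t)`. Since
`q t = 2 (D + ln (1/ε))` and `q ≥ 1/2`, the exponent `D - q² t` is at most `-ln (1/ε) = ln ε`.
-/

open MeasureTheory ProbabilityTheory Real

lemma exp_mul_eq_of_zero_or_one {Ω : Type*} {X : Ω → ℝ} (hX : ∀ ω, X ω = 0 ∨ X ω = 1) (s : ℝ) :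
    (fun ω => exp (s * X ω)) = fun ω => 1 + (exp s - 1) * {ω | X ω = 1}.indicator 1 ω := by
  funext ω
  rcases hX ω with h | h <;> simp [h]

section ZeroOne

variable {Ω : Type*} [MeasurableSpace Ω] {μ : Measure Ω} {X : Ω → ℝ}

lemma integrable_exp_mul_of_zero_or_one [IsFiniteMeasure μ] (hmeas : Measurable X)
    (hX : ∀ ω, X ω = 0 ∨ X ω = 1) (s : ℝ) : Integrable (fun ω => exp (s * X ω)) μ := by
  rw [exp_mul_eq_of_zero_or_one hX]
  exact (integrable_const 1).add
    (((integrable_const 1).indicator (hmeas (measurableSet_singleton 1))).const_mul _)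

lemma mgf_eq_of_zero_or_one [IsProbabilityMeasure μ] (hmeas : Measurable X)
    (hX : ∀ ω, X ω = 0 ∨ X ω = 1) (s : ℝ) :
    mgf X μ s = 1 + (exp s - 1) * μ.real {ω | X ω = 1} := by
  have hset : MeasurableSet {ω | X ω = 1} := hmeas (measurableSet_singleton 1)
  rw [mgf, exp_mul_eq_of_zero_or_one hX, integral_add (integrable_const 1)
    (((integrable_const 1).indicator hset).const_mul _), integral_const_mul,
    integral_indicator_one hset]
  simp

lemma mgf_le_exp_of_zero_or_one [IsProbabilityMeasure μ] (hmeas : Measurable X)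
    (hX : ∀ ω, X ω = 0 ∨ X ω = 1) {p s : ℝ} (hp : p ≤ μ.real {ω | X ω = 1}) (hs : s ≤ 0) :
    mgf X μ s ≤ exp ((exp s - 1) * p) := by
  have hexp : exp s - 1 ≤ 0 := by linarith [exp_le_one_iff.mpr hs]
  calc mgf X μ s = 1 + (exp s - 1) * μ.real {ω | X ω = 1} := mgf_eq_of_zero_or_one hmeas hX s
    _ ≤ (exp s - 1) * p + 1 := by nlinarith
    _ ≤ exp ((exp s - 1) * p) := add_one_le_exp _

end ZeroOne

theorem measureReal_sum_le_le_exp_of_zero_or_one {Ω ι : Type*} [MeasurableSpace Ω]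
    {μ : Measure Ω} [Fintype ι] {Y : ι → Ω → ℝ} (hind : iIndepFun Y μ)
    (hmeas : ∀ i, Measurable (Y i)) (hY : ∀ i ω, Y i ω = 0 ∨ Y i ω = 1) {p s : ℝ}
    (hp : ∀ i, p ≤ μ.real {ω | Y i ω = 1}) (hs : s ≤ 0) (a : ℝ) :
    μ.real {ω | ∑ i, Y i ω ≤ a} ≤ exp (-s * a + (exp s - 1) * p * Fintype.card ι) := by
  have := hind.isProbabilityMeasure
  have hint := hind.integrable_exp_mul_sum hmeas (s := Finset.univ)
    fun i _ => integrable_exp_mul_of_zero_or_one (μ := μ) (hmeas i) (hY i) s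
  have hmgf : mgf (∑ i, Y i) μ s ≤ exp ((exp s - 1) * p * Fintype.card ι) :=
    calc mgf (∑ i, Y i) μ s = ∏ i, mgf (Y i) μ s := hind.mgf_sum hmeas Finset.univ
      _ ≤ ∏ _i : ι, exp ((exp s - 1) * p) := Finset.prod_le_prod (fun _ _ => mgf_nonneg)
          fun i _ => mgf_le_exp_of_zero_or_one (hmeas i) (hY i) (hp i) hs
      _ = exp ((exp s - 1) * p * Fintype.card ι) := by
          rw [Finset.prod_const, Finset.card_univ, ← exp_nat_mul, mul_comm]
  calc μ.real {ω | ∑ i, Y i ω ≤ a} = μ.real {ω | (∑ i, Y i) ω ≤ a} := by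
        simp only [Finset.sum_apply]
    _ ≤ exp (-s * a) * mgf (∑ i, Y i) μ s := measure_le_le_exp_mul_mgf a hs hint
    _ ≤ exp (-s * a) * exp ((exp s - 1) * p * Fintype.card ι) := by gcongr
    _ = exp (-s * a + (exp s - 1) * p * Fintype.card ι) := (exp_add _ _).symm

theorem stmt3_general {Ω : Type*} [MeasureSpace Ω] [IsProbabilityMeasure (ℙ : Measure Ω)]
    (D : ℕ) (ε : ℝ) (hε0 : 0 < ε)
    (t : ℕ) (ht : (t : ℝ) = 2 * ((D : ℝ) + Real.log (1 / ε)) / (1 - 1 / Real.exp 1))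
    (Y : Fin t → Ω → ℝ) (hmeas : ∀ i, Measurable (Y i))
    (hind : iIndepFun Y ℙ)
    (hval : ∀ i ω, Y i ω = 0 ∨ Y i ω = 1)
    (hbern : ∀ i, ENNReal.ofReal (1 - 1 / Real.exp 1) ≤ ℙ {ω | Y i ω = 1}) :
    ℙ {ω | (∑ i, Y i ω) < (D : ℝ)} ≤ ENNReal.ofReal ε := by
  set q := 1 - 1 / exp 1
  have hq_half : 1 / 2 ≤ q := by
    have : 1 / exp 1 ≤ 1 / 2 := one_div_le_one_div_of_le two_pos (by linarith [add_one_le_exp 1])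
    linarith
  have hqt : q * t = 2 * (D + log (1 / ε)) := by
    rw [ht, mul_div_cancel₀ _ (by linarith)]
  have hp : ∀ i, q ≤ (ℙ : Measure Ω).real {ω | Y i ω = 1} := fun i =>
    (ENNReal.ofReal_le_iff_le_toReal (measure_ne_top _ _)).mp (hbern i)
  have hexponent : -(-1) * D + (exp (-1) - 1) * q * (Fintype.card (Fin t)) ≤ log ε := by
    have hexp : exp (-1) - 1 = -q := by rw [exp_neg, inv_eq_one_div]; ring
    have hlog : log ε = -log (1 / ε) := by rw [one_div, log_inv, neg_neg]
    rw [hexp, Fintype.card_fin, hlog]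
    nlinarith [mul_nonneg (sub_nonneg.mpr hq_half) (by positivity : (0 : ℝ) ≤ q * t)]
  rw [ENNReal.le_ofReal_iff_toReal_le (measure_ne_top _ _) hε0.le]
  calc (ℙ : Measure Ω).real {ω | (∑ i, Y i ω) < (D : ℝ)}
        ≤ (ℙ : Measure Ω).real {ω | ∑ i, Y i ω ≤ D} :=
        measureReal_mono fun _ h => le_of_lt (Set.mem_ofPred.mp h)
    _ ≤ exp (log ε) := (measureReal_sum_le_le_exp_of_zero_or_one hind hmeas hval hp
        (by norm_num) D).trans (exp_le_exp.mpr hexponent)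
    _ = ε := exp_log hε0

/-- Chernoff-type bound for groups of concurrent steal attempts:
`t = 2(D + ln(1/ε))/(1 - 1/e)` independent Bernoulli trials, each with success
probability at least `1 - 1/e`, yield fewer than `D` successes with probability
at most `ε`. -/
theorem stmt3 {Ω : Type*} [MeasureSpace Ω] [IsProbabilityMeasure (ℙ : Measure Ω)]
    (D : ℕ) (hD : 0 < D) (ε : ℝ) (hε0 : 0 < ε) (hε1 : ε < 1)
    (t : ℕ) (ht : (t : ℝ) = 2 * ((D : ℝ) + Real.log (1 / ε)) / (1 - 1 / Real.exp 1))
    (Y : Fin t → Ω → ℝ) (hmeas : ∀ i, Measurable (Y i))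
    (hind : iIndepFun Y ℙ)
    (hval : ∀ i ω, Y i ω = 0 ∨ Y i ω = 1)
    (hbern : ∀ i, ENNReal.ofReal (1 - 1 / Real.exp 1) ≤ ℙ {ω | Y i ω = 1}) :
    ℙ {ω | (∑ i, Y i ω) < (D : ℝ)} ≤ ENNReal.ofReal ε :=
  stmt3_general D ε hε0 t ht Y hmeas hind hval hbern
end

section
/- Let Q : ℕ → ℝ satisfy the α-β recurrence Q(n) = α·Q(n/β) + Σ_i k_i·n^{l_i}·(log n)^{m_i} (n a power of β > 1, α ≥ 1, k_i > 0, l_i, m_i ≥ 0, Q(1) = O(Σ_r k_r)). Then Q(n) = O( Σ_{i : l_i > log_β α} k_i n^{l_i} (log n)^{m_i} + Σ_{j : l_j = log_β α} k_j n^{l_j} (log n)^{m_j + 1} + Σ_{r : l_r < log_β α} k_r n^{log_β α} ). -/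
/-!
Unrolling the recurrence writes `q i` as `α ^ i * q 0` plus, for each term, `k` times the
convolution `∑_{t ≤ i} α ^ (i - t) * b ^ t * w t` with `b = β ^ l` and the nondecreasing weight
`w t = (log (β ^ t)) ^ m`. Comparing `l` with `log_β α` amounts to comparing `b` with `α`, and
there are three regimes: for `b > α` the convolution is a geometric sum dominated by its last
term `b ^ i * w i`; for `b = α` it has `i` terms, each at most `α ^ i * w i`; for `b < α` it is
`α ^ i` times a partial sum of a convergent series. The homogeneous part `α ^ i * q 0` is
dominated by the `t = 1` term of every convolution.
-/

open Finset Real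

theorem eq_pow_mul_add_sum_of_succ_eq {R : Type*} [CommSemiring R] {a : R} {q g : ℕ → R}
    (h : ∀ i, q (i + 1) = a * q i + g (i + 1)) (i : ℕ) :
    q i = a ^ i * q 0 + ∑ t ∈ Icc 1 i, a ^ (i - t) * g t := by
  induction i with
  | zero => simp
  | succ n ih =>
    rw [h, ih, sum_Icc_succ_top (by omega), mul_add, mul_sum, Nat.sub_self, pow_zero, one_mul,
      ← mul_assoc, ← pow_succ', ← add_assoc]
    congr 2
    refine sum_congr rfl fun t ht => ?_
    rw [← mul_assoc, ← pow_succ', Nat.sub_add_comm (mem_Icc.1 ht).2]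

theorem sum_ite_lt_eq_gt {ι M α : Type*} [AddCommMonoid M] [LinearOrder α] (s : Finset ι)
    (x : ι → α) (c : α) (f g h : ι → M) :
    ∑ j ∈ s, (if c < x j then f j else if x j = c then g j else h j) =
      ∑ j ∈ s.filter (fun j => c < x j), f j + ∑ j ∈ s.filter (fun j => x j = c), g j +
        ∑ j ∈ s.filter (fun j => x j < c), h j := by
  rw [sum_ite, sum_ite, filter_filter, filter_filter, add_assoc]
  simp only [not_lt]
  congr 3
  · exact filter_congr fun j _ => ⟨And.right, fun hj => ⟨hj.le, hj⟩⟩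
  · exact filter_congr fun j _ => ⟨fun hj => lt_of_le_of_ne hj.1 hj.2, fun hj => ⟨hj.le, hj.ne⟩⟩

theorem exists_sum_le_mul_sum {ι κ : Type*} [Fintype ι] {P : κ → Prop} {f g : ι → κ → ℝ}
    (hg : ∀ j x, P x → 0 ≤ g j x) (hfg : ∀ j, ∃ A, ∀ x, P x → f j x ≤ A * g j x) :
    ∃ C > 0, ∀ x, P x → ∑ j, f j x ≤ C * ∑ j, g j x := by
  choose A hA using hfg
  obtain ⟨M, hM⟩ := Finite.exists_le A
  refine ⟨max M 1, by positivity, fun x hx => ?_⟩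
  rw [mul_sum]
  exact sum_le_sum fun j _ => (hA j x hx).trans <|
    mul_le_mul_of_nonneg_right ((hM j).trans (le_max_left _ _)) (hg j x hx)

theorem summable_geometric_mul_rpow {r m : ℝ} (hr0 : 0 ≤ r) (hr1 : r < 1) (hm : 0 ≤ m) :
    Summable fun t : ℕ => r ^ t * (t : ℝ) ^ m := by
  refine (summable_pow_mul_geometric_of_norm_lt_one ⌈m⌉₊ (r := r)
    (by rwa [norm_of_nonneg hr0])).of_nonneg_of_le (fun t => by positivity) fun t => ?_
  rw [mul_comm]
  gcongr
  rcases t with _ | t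
  · rcases hm.eq_or_lt with rfl | hm
    · simp
    · simp [zero_rpow hm.ne']
  · rw [← rpow_natCast]
    exact rpow_le_rpow_of_exponent_le (by simp) (Nat.le_ceil m)

/-- The solution of `x (i + 1) = a * x i + b ^ (i + 1) * w (i + 1)` with `x 0 = 0`. -/
def particularSolution (a b : ℝ) (w : ℕ → ℝ) (i : ℕ) : ℝ :=
  ∑ t ∈ Icc 1 i, a ^ (i - t) * b ^ t * w t

section particularSolution

variable {a b : ℝ} {w : ℕ → ℝ}

theorem mul_pow_add_particularSolution_le (ha : 0 ≤ a) (hb : 0 < b) (hw0 : ∀ t, 0 ≤ w t)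
    (hw1 : 0 < w 1) {c : ℝ} (hc : 0 ≤ c) {i : ℕ} (hi : 1 ≤ i) :
    c * a ^ i + particularSolution a b w i ≤
      (1 + c * a / (b * w 1)) * particularSolution a b w i := by
  have hfirst : a ^ (i - 1) * b ^ 1 * w 1 ≤ particularSolution a b w i :=
    single_le_sum (f := fun t => a ^ (i - t) * b ^ t * w t)
      (fun t _ => by have := hw0 t; positivity) (mem_Icc.2 ⟨le_rfl, hi⟩)
  have hhom : c * a ^ i ≤ c * a / (b * w 1) * particularSolution a b w i := by
    rw [div_mul_eq_mul_div, le_div_iff₀ (by positivity), ← pow_sub_mul_pow a hi]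
    calc c * (a ^ (i - 1) * a ^ 1) * (b * w 1) = c * a * (a ^ (i - 1) * b ^ 1 * w 1) := by ring
      _ ≤ c * a * particularSolution a b w i := by gcongr
  linarith

theorem particularSolution_le_of_lt (ha : 0 ≤ a) (hab : a < b) (hw0 : ∀ t, 0 ≤ w t)
    (hw : Monotone w) (i : ℕ) :
    particularSolution a b w i ≤ b / (b - a) * b ^ i * w i := by
  have hb : 0 < b := ha.trans_lt hab
  have hgeom : ∑ t ∈ range (i + 1), b ^ t * a ^ (i - t) ≤ b / (b - a) * b ^ i := by
    have h := geom_sum₂_mul b a (i + 1)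
    simp only [Nat.add_sub_cancel] at h
    rw [div_mul_eq_mul_div, le_div_iff₀ (sub_pos.2 hab), h, ← pow_succ']
    exact sub_le_self _ (by positivity)
  calc particularSolution a b w i ≤ ∑ t ∈ Icc 1 i, a ^ (i - t) * b ^ t * w i :=
        sum_le_sum fun t ht => by gcongr; exact hw (mem_Icc.1 ht).2
    _ ≤ ∑ t ∈ range (i + 1), b ^ t * a ^ (i - t) * w i := by
        simp only [mul_comm (a ^ _)]
        exact sum_le_sum_of_subset_of_nonneg (fun t ht => mem_range.2 (by grind))
          fun t _ _ => by have := hw0 i; positivity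
    _ ≤ b / (b - a) * b ^ i * w i := by
        rw [← sum_mul]; exact mul_le_mul_of_nonneg_right hgeom (hw0 i)

theorem particularSolution_self_le (ha : 0 ≤ a) (hw : Monotone w) (i : ℕ) :
    particularSolution a a w i ≤ i * a ^ i * w i := by
  calc particularSolution a a w i ≤ ∑ t ∈ Icc 1 i, a ^ i * w i :=
        sum_le_sum fun t ht => by
          rw [pow_sub_mul_pow a (mem_Icc.1 ht).2]; gcongr; exact hw (mem_Icc.1 ht).2
    _ = i * a ^ i * w i := by simp [mul_assoc]

theorem particularSolution_le_of_gt (hb : 0 ≤ b) (hba : b < a) (hw0 : ∀ t, 0 ≤ w t)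
    (hw : Summable fun t => (b / a) ^ t * w t) (i : ℕ) :
    particularSolution a b w i ≤ (∑' t, (b / a) ^ t * w t) * a ^ i := by
  have ha : 0 < a := hb.trans_lt hba
  calc particularSolution a b w i = (∑ t ∈ Icc 1 i, (b / a) ^ t * w t) * a ^ i := by
        rw [particularSolution, sum_mul]
        refine sum_congr rfl fun t ht => ?_
        rw [div_pow, pow_sub₀ a ha.ne' (mem_Icc.1 ht).2]
        field_simp
    _ ≤ (∑' t, (b / a) ^ t * w t) * a ^ i := by
        gcongr
        exact hw.sum_le_tsum _ fun t _ => by have := hw0 t; positivity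

end particularSolution

noncomputable def termGrowth (α β l m : ℝ) (i : ℕ) : ℝ :=
  if logb β α < l then (β ^ i) ^ l * log (β ^ i) ^ m
  else if l = logb β α then (β ^ i) ^ l * log (β ^ i) ^ (m + 1)
  else (β ^ i) ^ logb β α

section termGrowth

variable {α β : ℝ} (l m : ℝ)

theorem termGrowth_nonneg (hβ : 1 < β) (i : ℕ) : 0 ≤ termGrowth α β l m i := by
  have : 0 ≤ log (β ^ i) := log_nonneg (one_le_pow₀ hβ.le)
  unfold termGrowth
  split_ifs <;> positivity

theorem exists_le_mul_termGrowth (hα : 0 < α) (hβ : 1 < β) (hm : 0 ≤ m) {c : ℝ} (hc : 0 ≤ c) :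
    ∃ A, ∀ i, 1 ≤ i → c * α ^ i + particularSolution α (β ^ l) (fun t => log (β ^ t) ^ m) i ≤
      A * termGrowth α β l m i := by
  set w : ℕ → ℝ := fun t => log (β ^ t) ^ m
  have hlogβ : 0 < log β := log_pos hβ
  have hlog : ∀ t : ℕ, log (β ^ t) = t * log β := fun t => Real.log_pow β t
  have hw0 : ∀ t, 0 ≤ w t := fun t => by simp only [w, hlog]; positivity
  have hw : Monotone w := fun s t hst => by
    simp only [w, hlog]; gcongr
  have hw1 : 0 < w 1 := by simp only [w, pow_one]; positivity
  have hb : 0 < β ^ l := rpow_pos_of_pos (by linarith) l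
  have hpow : ∀ i : ℕ, (β ^ i) ^ l = (β ^ l) ^ i := fun i => (rpow_pow_comm (by linarith) l i).symm
  suffices ∃ A, ∀ i, 1 ≤ i →
      particularSolution α (β ^ l) w i ≤ A * termGrowth α β l m i by
    obtain ⟨A, hA⟩ := this
    refine ⟨(1 + c * α / (β ^ l * w 1)) * A, fun i hi => ?_⟩
    rw [mul_assoc]
    exact (mul_pow_add_particularSolution_le hα.le hb hw0 hw1 hc hi).trans
      (by gcongr; exact hA i hi)
  rcases lt_trichotomy (logb β α) l with hl | hl | hl
  · have hab : α < β ^ l := (logb_lt_iff_lt_rpow hβ hα).1 hl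
    refine ⟨β ^ l / (β ^ l - α), fun i _ => ?_⟩
    rw [termGrowth, if_pos hl, hpow, ← mul_assoc]
    exact particularSolution_le_of_lt hα.le hab hw0 hw i
  · have hab : β ^ l = α := hl ▸ rpow_logb (by linarith) hβ.ne' hα
    refine ⟨(log β)⁻¹, fun i hi => ?_⟩
    have hi' : (0 : ℝ) < i := by exact_mod_cast hi
    rw [termGrowth, if_neg hl.not_lt, if_pos hl.symm, hpow, hab, hlog i,
      rpow_add_one (by positivity)]
    calc particularSolution α α w i ≤ i * α ^ i * w i := particularSolution_self_le hα.le hw i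
      _ = (log β)⁻¹ * (α ^ i * ((i * log β) ^ m * (i * log β))) := by
          simp only [w, hlog]; field_simp
  · have hab : β ^ l < α := (lt_logb_iff_rpow_lt hβ hα).1 hl
    have hsum : Summable fun t => (β ^ l / α) ^ t * w t := by
      have := (summable_geometric_mul_rpow (by positivity) ((div_lt_one hα).2 hab) hm).mul_right
        (log β ^ m)
      refine this.congr fun t => ?_
      simp only [w, hlog, mul_rpow (Nat.cast_nonneg t) hlogβ.le, mul_assoc]
    refine ⟨∑' t, (β ^ l / α) ^ t * w t, fun i _ => ?_⟩
    rw [termGrowth, if_neg hl.not_gt, if_neg hl.ne, ← rpow_pow_comm (by linarith),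
      rpow_logb (by linarith) hβ.ne' hα]
    exact particularSolution_le_of_gt hb.le hab hw0 hsum i

end termGrowth

open Classical in
theorem stmt9_general {ι : Type*} [Fintype ι] (α β : ℝ) (hα : 1 ≤ α) (hβ : 1 < β)
    (k l m : ι → ℝ) (hk : ∀ j, 0 < k j) (hm : ∀ j, 0 ≤ m j)
    (q : ℕ → ℝ)
    (hrec : ∀ i : ℕ, q (i + 1) = α * q i +
      ∑ j, k j * (β ^ (i + 1)) ^ (l j) * (Real.log (β ^ (i + 1))) ^ (m j))
    (hbase : ∃ c : ℝ, q 0 ≤ c * ∑ j, k j) :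
    ∃ C > 0, ∀ i : ℕ, 1 ≤ i →
      q i ≤ C * ((∑ j ∈ Finset.univ.filter (fun j => Real.logb β α < l j),
                    k j * (β ^ i) ^ (l j) * (Real.log (β ^ i)) ^ (m j)) +
                 (∑ j ∈ Finset.univ.filter (fun j => l j = Real.logb β α),
                    k j * (β ^ i) ^ (l j) * (Real.log (β ^ i)) ^ (m j + 1)) +
                 (∑ j ∈ Finset.univ.filter (fun j => l j < Real.logb β α),
                    k j * (β ^ i) ^ (Real.logb β α))) := by
  obtain ⟨c, hc⟩ := hbase
  have hα0 : 0 < α := by linarith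
  set W : ι → ℕ → ℝ := fun j => particularSolution α (β ^ l j) (fun t => log (β ^ t) ^ m j)
  have hq : ∀ i, q i = α ^ i * q 0 + ∑ j, k j * W j i := fun i => by
    rw [eq_pow_mul_add_sum_of_succ_eq
      (g := fun t => ∑ j, k j * (β ^ t) ^ l j * log (β ^ t) ^ m j) hrec i]
    simp only [W, particularSolution, mul_sum]
    rw [sum_comm]
    refine congrArg _ (sum_congr rfl fun j _ => sum_congr rfl fun t _ => ?_)
    rw [← rpow_pow_comm (by linarith)]; ring
  obtain ⟨C, hC, hbound⟩ := exists_sum_le_mul_sum (P := fun i => 1 ≤ i)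
    (f := fun j i => k j * (max c 0 * α ^ i + W j i))
    (g := fun j i => k j * termGrowth α β (l j) (m j) i)
    (fun j i _ => mul_nonneg (hk j).le (termGrowth_nonneg _ _ hβ i))
    fun j => (exists_le_mul_termGrowth (l j) (m j) hα0 hβ (hm j) (le_max_right c 0)).imp
      fun A hA i hi => by rw [mul_left_comm]; exact mul_le_mul_of_nonneg_left (hA i hi) (hk j).le
  refine ⟨C, hC, fun i hi => ?_⟩
  have hq0 : q 0 ≤ max c 0 * ∑ j, k j :=
    hc.trans (mul_le_mul_of_nonneg_right (le_max_left c 0) (sum_nonneg fun j _ => (hk j).le))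
  calc q i ≤ α ^ i * (max c 0 * ∑ j, k j) + ∑ j, k j * W j i := by rw [hq]; gcongr
    _ = ∑ j, k j * (max c 0 * α ^ i + W j i) := by
        simp only [mul_add, sum_add_distrib, mul_sum]
        exact congrArg (· + _) (sum_congr rfl fun j _ => by ring)
    _ ≤ C * ∑ j, k j * termGrowth α β (l j) (m j) i := hbound i hi
    _ = _ := by simp only [termGrowth, mul_ite, ← mul_assoc]; rw [sum_ite_lt_eq_gt]

open Classical in
theorem stmt9 {ι : Type*} [Fintype ι] (α β : ℝ) (hα : 1 ≤ α) (hβ : 1 < β)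
    (k l m : ι → ℝ) (hk : ∀ j, 0 < k j) (hl : ∀ j, 0 ≤ l j) (hm : ∀ j, 0 ≤ m j)
    (q : ℕ → ℝ)
    (hrec : ∀ i : ℕ, q (i + 1) = α * q i +
      ∑ j, k j * (β ^ (i + 1)) ^ (l j) * (Real.log (β ^ (i + 1))) ^ (m j))
    (hbase : ∃ c : ℝ, q 0 ≤ c * ∑ j, k j) :
    ∃ C > 0, ∀ i : ℕ, 1 ≤ i →
      q i ≤ C * ((∑ j ∈ Finset.univ.filter (fun j => Real.logb β α < l j),
                    k j * (β ^ i) ^ (l j) * (Real.log (β ^ i)) ^ (m j)) +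
                 (∑ j ∈ Finset.univ.filter (fun j => l j = Real.logb β α),
                    k j * (β ^ i) ^ (l j) * (Real.log (β ^ i)) ^ (m j + 1)) +
                 (∑ j ∈ Finset.univ.filter (fun j => l j < Real.logb β α),
                    k j * (β ^ i) ^ (Real.logb β α))) :=
  stmt9_general α β hα hβ k l m hk hm q hrec hbase
end

section
/- Let Q : ℕ → ℝ satisfy Q(n) = 2·Q(n/2) + 6·Q_MM(n/2) for n > 1 a power of 2 with Q(1) = O(1), where Q_MM(n) ≤ C·(n³/(B√M) + P^{1/3} n² (log n)^{2/3}/B + P (log n)²) for constants/parameters C, B, M, P ≥ 1. Then Q(n) = O(n³/(B√M) + P^{1/3} n² (log n)^{2/3}/B + P·n). -/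
set_option maxHeartbeats 1000000 in
/-- Parallel cache complexity of Kleene's APSP algorithm: `Q(n) = 2Q(n/2) + 6Q_MM(n/2)`
(encoded on powers of 2 by `q i = Q(2^i)`), with the stated bound on `Q_MM`, gives
`Q(n) = O(n³/(B√M) + P^{1/3} n² (log n)^{2/3}/B + P·n)`. -/
theorem stmt10 (B M P C : ℝ) (hB : 1 ≤ B) (hM : 1 ≤ M) (hP : 1 ≤ P) (hC : 1 ≤ C)
    (QMM : ℕ → ℝ)
    (hMM : ∀ n : ℕ, 1 ≤ n → QMM n ≤ C * ((n : ℝ) ^ 3 / (B * Real.sqrt M)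
      + P ^ ((1 : ℝ) / 3) * (n : ℝ) ^ 2 * (Real.log n) ^ ((2 : ℝ) / 3) / B
      + P * (Real.log n) ^ 2))
    (q : ℕ → ℝ) (hrec : ∀ i : ℕ, q (i + 1) = 2 * q i + 6 * QMM (2 ^ i)) :
    ∃ C' > 0, ∀ i : ℕ,
      q i ≤ C' * (((2 : ℝ) ^ i) ^ 3 / (B * Real.sqrt M)
        + P ^ ((1 : ℝ) / 3) * ((2 : ℝ) ^ i) ^ 2
            * (Real.log ((2 : ℝ) ^ i)) ^ ((2 : ℝ) / 3) / B
        + P * (2 : ℝ) ^ i) := by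
  have hL0 : (0:ℝ) < Real.log 2 := Real.log_pos (by norm_num)
  have hL1 : Real.log 2 ≤ 1 := by
    have h := Real.log_le_sub_one_of_pos (by norm_num : (0:ℝ) < 2)
    linarith
  have hS : (1:ℝ) ≤ Real.sqrt M := by
    rw [show (1:ℝ) = Real.sqrt 1 from (Real.sqrt_one).symm]
    exact Real.sqrt_le_sqrt hM
  have hBS : (0:ℝ) < B * Real.sqrt M := by positivity
  have hmax0 : (0:ℝ) ≤ max (q 0) 0 := le_max_right _ _
  have hq0 : q 0 ≤ max (q 0) 0 := le_max_left _ _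
  set C' : ℝ := 18*C + max (q 0) 0 + 1 with hC'def
  have hC'pos : 0 < C' := by nlinarith
  have hC18 : 18*C ≤ C' := by nlinarith
  refine ⟨C', hC'pos, ?_⟩
  have key : ∀ i : ℕ, q i ≤ C' * (((2 : ℝ) ^ i) ^ 3 / (B * Real.sqrt M)
        + P ^ ((1 : ℝ) / 3) * ((2 : ℝ) ^ i) ^ 2
            * (Real.log ((2 : ℝ) ^ i)) ^ ((2 : ℝ) / 3) / B
        + P * (2 : ℝ) ^ i) - 6*C*P*((i:ℝ)^2 + 2*(i:ℝ) + 3) := by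
    intro i
    induction i with
    | zero =>
      simp only [pow_zero, Nat.cast_zero, one_pow, mul_one, Real.log_one]
      rw [Real.zero_rpow (by norm_num : (2:ℝ)/3 ≠ 0)]
      have h1 : (0:ℝ) ≤ 1 / (B * Real.sqrt M) := by positivity
      have h2 : 0 ≤ C' * (1 / (B * Real.sqrt M)) := mul_nonneg hC'pos.le h1
      have h3 : 0 ≤ (C' - 18*C) * (P - 1) := mul_nonneg (by linarith) (by linarith)
      have h4 : C' - 18*C = max (q 0) 0 + 1 := by rw [hC'def]; ring
      have h5 : P ^ ((1:ℝ)/3) * 0 / B = 0 := by ring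
      rw [h5]
      nlinarith
    | succ i ih =>
      rw [hrec i]
      have hMMi := hMM (2^i) Nat.one_le_two_pow
      have hcast : ((2^i : ℕ) : ℝ) = (2:ℝ)^i := by push_cast; ring
      rw [hcast, Real.log_pow] at hMMi
      rw [Real.log_pow] at ih ⊢
      push_cast at ih hMMi ⊢
      rw [show (2:ℝ)^(i+1) = 2^i * 2 from pow_succ 2 i]
      have ha0 : (0:ℝ) < (2:ℝ)^i := by positivity
      have ht0 : (0:ℝ) ≤ ((i:ℝ) * Real.log 2) ^ ((2:ℝ)/3) :=
        Real.rpow_nonneg (by positivity) _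
      have hts : ((i:ℝ) * Real.log 2) ^ ((2:ℝ)/3) ≤ (((i:ℝ)+1) * Real.log 2) ^ ((2:ℝ)/3) := by
        apply Real.rpow_le_rpow (by positivity) _ (by norm_num)
        nlinarith [Nat.cast_nonneg (α := ℝ) i]
      have htt : ((i:ℝ) * Real.log 2)^2 ≤ (i:ℝ)^2 := by
        nlinarith [mul_nonneg (sq_nonneg (i:ℝ)) (by nlinarith : (0:ℝ) ≤ 1 - (Real.log 2)^2)]
      have hPa : (0:ℝ) < P ^ ((1:ℝ)/3) := Real.rpow_pos_of_pos (by linarith) _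
      have hS0 : (0:ℝ) < Real.sqrt M := by linarith
      generalize hgr : ((i:ℝ) * Real.log 2)^2 = r at hMMi htt
      generalize hgt : ((i:ℝ) * Real.log 2) ^ ((2:ℝ)/3) = t at ih hMMi hts ht0
      generalize hgs : (((i:ℝ)+1) * Real.log 2) ^ ((2:ℝ)/3) = s at hts ⊢
      generalize hgw : P ^ ((1:ℝ)/3) = w at ih hMMi hPa ⊢
      generalize hga : (2:ℝ)^i = a at ih hMMi ha0 ⊢
      generalize hgm : Real.sqrt M = m at ih hMMi hS0 ⊢
      have hr0 : (0:ℝ) ≤ r := hgr ▸ sq_nonneg _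
      have hBm : (0:ℝ) < B * m := by positivity
      have hX1 : (0:ℝ) ≤ a^3 / (B * m) := by positivity
      have hW : (0:ℝ) ≤ w * a^2 / B := by positivity
      have e1 : (2*C' + 6*C) * (a^3 / (B * m)) ≤ C' * ((a*2)^3 / (B * m)) := by
        have h8 : (a*2)^3 / (B * m) = 8 * (a^3 / (B * m)) := by ring
        rw [h8]
        nlinarith [mul_nonneg (by linarith : (0:ℝ) ≤ 6*C' - 6*C) hX1]
      have e2 : (2*C' + 6*C) * (w * a^2 * t / B) ≤ C' * (w * (a*2)^2 * s / B) := by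
        have h4 : w * (a*2)^2 * s / B = 4 * ((w * a^2 / B) * s) := by ring
        have h5 : w * a^2 * t / B = (w * a^2 / B) * t := by ring
        rw [h4, h5]
        nlinarith [mul_nonneg hW ht0, mul_nonneg hW (by linarith : (0:ℝ) ≤ s - t),
          mul_nonneg (mul_nonneg hW (by linarith : (0:ℝ) ≤ s - t)) (by linarith : (0:ℝ) ≤ C')]
      have e3 : 2*(C' * (P * a) - 6*C*P*((i:ℝ)^2 + 2*(i:ℝ) + 3)) + 6*(C * (P * r)) ≤
          C' * (P * (a*2)) - 6*C*P*(((i:ℝ)+1)^2 + 2*((i:ℝ)+1) + 3) := by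
        have hCP : (0:ℝ) ≤ 6*C*P := by nlinarith
        nlinarith [mul_le_mul_of_nonneg_left htt hCP]
      nlinarith [hMMi, ih, e1, e2, e3, hC]
  intro i
  have h := key i
  have hh : (0:ℝ) ≤ 6*C*P*((i:ℝ)^2 + 2*(i:ℝ) + 3) := by positivity
  linarith
end

section
/- Let Q : ℕ → ℝ satisfy Q(n) = 4·Q(n/2) + 4·(n/2)·Q_2D(n/2) + 2·Q_MT(n/2) for n > 1 a power of 2 with Q(1) = O(1), where Q_2D(n) ≤ C·(n²/(BM) + P^{1/2} n (log n)/B + P (log n)²) and Q_MT(n) ≤ C·(n²/B + P (log n)²). Then Q(n) = O(n³/(BM) + P^{1/2} n² (log n)²/B + P·n^{log₂ 3}). -/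
/-!
At size `x = 2 ^ i` one level of the recursion costs `O(8^i/(BM) + 4^i (i + 1))` with a constant
`8CP`, because `log x ≤ i ≤ x`. The recurrence `q (i+1) ≤ 4 q i + 8CP (8^i/(BM) + 4^i (i + 1))`
then propagates the invariant `q i ≤ C₀ (8^i/(BM) + 4^i (i² + 1))` with `C₀ = max (q 0) (8CP)`.
Finally `i² + 1 ≤ 8 (log 2^i)²` for `i ≥ 1`, so the `4^i (i² + 1)` part is absorbed by
`P^{1/2} 4^i (log 2^i)² / B` at the price of a factor `8B`; at `i = 0` it is absorbed by `P`.
-/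

open Real

lemma log_two_pow_le (n : ℕ) : log ((2 : ℝ) ^ n) ≤ n := by
  rw [log_pow]
  exact mul_le_of_le_one_right n.cast_nonneg (by linarith [log_two_lt_d9])

lemma natCast_le_two_pow (n : ℕ) : (n : ℝ) ≤ 2 ^ n := by
  exact_mod_cast n.lt_two_pow_self.le

lemma sq_add_one_le_eight_mul_log_two_pow_sq {n : ℕ} (hn : 1 ≤ n) :
    (n : ℝ) ^ 2 + 1 ≤ 8 * log ((2 : ℝ) ^ n) ^ 2 := by
  have hn' : (1 : ℝ) ≤ n := by exact_mod_cast hn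
  have h : (n : ℝ) / 2 ≤ n * log 2 := by nlinarith [log_two_gt_d9]
  rw [log_pow]
  nlinarith [mul_self_le_mul_self (by positivity) h]

-- `ℓ` plays `log x` and `sP` plays `P ^ (1/2)`, at `x = 2 ^ n`.
lemma level_cost_le {B M P C sP x ℓ n V W : ℝ} (hB : 1 ≤ B) (hM : 0 ≤ M) (hP : 1 ≤ P) (hC : 0 ≤ C)
    (hsP : sP ≤ P) (hℓ : 0 ≤ ℓ) (hℓn : ℓ ≤ n) (hnx : n ≤ x)
    (hV : V ≤ C * (x ^ 2 / (B * M) + sP * x * ℓ / B + P * ℓ ^ 2))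
    (hW : W ≤ C * (x ^ 2 / B + P * ℓ ^ 2)) :
    4 * x * V + 2 * W ≤ 8 * C * P * (x ^ 3 / (B * M) + x ^ 2 * (n + 1)) := by
  have hn : 0 ≤ n := hℓ.trans hℓn
  have hx : 0 ≤ x := hn.trans hnx
  have hℓ_sq : ℓ ^ 2 ≤ x * n := by nlinarith
  have h2D : sP * x * ℓ / B + P * ℓ ^ 2 ≤ 2 * P * x * n := by
    have : sP * x * ℓ / B ≤ P * x * ℓ := by
      rw [div_le_iff₀ (by linarith)]
      linarith [mul_le_mul_of_nonneg_right (hsP.trans (le_mul_of_one_le_right (by linarith) hB))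
        (mul_nonneg hx hℓ)]
    nlinarith [mul_nonneg (mul_nonneg (by linarith : (0 : ℝ) ≤ P) hx) (sub_nonneg.2 hℓn)]
  have hMT : x ^ 2 / B + P * ℓ ^ 2 ≤ x ^ 2 + P * x ^ 2 := by
    have : x ^ 2 / B ≤ x ^ 2 := div_le_self (sq_nonneg x) hB
    nlinarith [mul_le_mul_of_nonneg_left (mul_le_mul_of_nonneg_left hnx hx) (by linarith : 0 ≤ P)]
  have hcube : 0 ≤ x ^ 3 / (B * M) := div_nonneg (by positivity) (mul_nonneg (by linarith) hM)
  calc 4 * x * V + 2 * W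
      ≤ 4 * x * (C * (x ^ 2 / (B * M) + 2 * P * x * n)) + 2 * (C * (x ^ 2 + P * x ^ 2)) := by
        gcongr
        · exact hV.trans (mul_le_mul_of_nonneg_left (by linarith) hC)
        · exact hW.trans (mul_le_mul_of_nonneg_left hMT hC)
    _ = 4 * C * (x ^ 3 / (B * M)) + 8 * C * P * (x ^ 2 * n) + 2 * C * (1 + P) * x ^ 2 := by ring
    _ ≤ 8 * C * P * (x ^ 3 / (B * M) + x ^ 2 * (n + 1)) := by
        nlinarith [mul_nonneg hC hcube, mul_nonneg hC (sq_nonneg x)]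

lemma le_of_le_four_mul_add {q : ℕ → ℝ} {D K C₀ : ℝ} (hD : 0 ≤ D) (hK : 0 ≤ K) (hKC₀ : K ≤ C₀)
    (h0 : q 0 ≤ C₀)
    (hstep : ∀ i : ℕ,
      q (i + 1) ≤ 4 * q i + K * (((2 : ℝ) ^ i) ^ 3 / D + ((2 : ℝ) ^ i) ^ 2 * (i + 1)))
    (i : ℕ) : q i ≤ C₀ * (((2 : ℝ) ^ i) ^ 3 / D + ((2 : ℝ) ^ i) ^ 2 * ((i : ℝ) ^ 2 + 1)) := by
  induction i with
  | zero =>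
    have : 0 ≤ C₀ * (1 / D) := mul_nonneg (hK.trans hKC₀) (by positivity)
    simp only [pow_zero, one_pow, CharP.cast_eq_zero]
    linarith
  | succ i ih =>
    have ha : 0 ≤ ((2 : ℝ) ^ i) ^ 3 / D := by positivity
    have hb : 0 ≤ ((2 : ℝ) ^ i) ^ 2 := by positivity
    have hi : (0 : ℝ) ≤ i := i.cast_nonneg
    calc q (i + 1)
        ≤ 4 * (C₀ * (((2 : ℝ) ^ i) ^ 3 / D + ((2 : ℝ) ^ i) ^ 2 * ((i : ℝ) ^ 2 + 1)))
          + K * (((2 : ℝ) ^ i) ^ 3 / D + ((2 : ℝ) ^ i) ^ 2 * (i + 1)) := by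
          linarith [hstep i]
      _ ≤ C₀ * (8 * (((2 : ℝ) ^ i) ^ 3 / D) + 4 * ((2 : ℝ) ^ i) ^ 2 * (((i : ℝ) + 1) ^ 2 + 1)) := by
          nlinarith [mul_le_mul_of_nonneg_right hKC₀ ha,
            mul_le_mul_of_nonneg_right hKC₀ (mul_nonneg hb (by linarith : (0 : ℝ) ≤ i + 1)),
            mul_nonneg (hK.trans hKC₀) ha, mul_nonneg (hK.trans hKC₀) (mul_nonneg hb hi)]
      _ = C₀ * (((2 : ℝ) ^ (i + 1)) ^ 3 / D
            + ((2 : ℝ) ^ (i + 1)) ^ 2 * (((i + 1 : ℕ) : ℝ) ^ 2 + 1)) := by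
          push_cast
          ring

lemma le_target_form {B D P C₀ : ℝ} (hB : 1 ≤ B) (hD : 0 ≤ D) (hP : 1 ≤ P) (hC₀ : 0 ≤ C₀)
    (i : ℕ) :
    C₀ * (((2 : ℝ) ^ i) ^ 3 / D + ((2 : ℝ) ^ i) ^ 2 * ((i : ℝ) ^ 2 + 1))
      ≤ 8 * B * C₀ * (((2 : ℝ) ^ i) ^ 3 / D
        + P ^ ((1 : ℝ) / 2) * ((2 : ℝ) ^ i) ^ 2 * log ((2 : ℝ) ^ i) ^ 2 / B
        + P * ((2 : ℝ) ^ i) ^ logb 2 3) := by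
  have hBC₀ : C₀ ≤ 8 * B * C₀ := le_mul_of_one_le_left hC₀ (by linarith)
  rcases Nat.eq_zero_or_pos i with rfl | hi
  · have hD' : 0 ≤ D⁻¹ := by positivity
    norm_num
    nlinarith [mul_le_mul_of_nonneg_right hBC₀ hD', mul_le_mul_of_nonneg_left hP (hC₀.trans hBC₀)]
  · have hcube : 0 ≤ ((2 : ℝ) ^ i) ^ 3 / D := by positivity
    have hsP : 1 ≤ P ^ ((1 : ℝ) / 2) := one_le_rpow hP (by norm_num)
    have hlog := sq_add_one_le_eight_mul_log_two_pow_sq hi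
    have hsq : ((2 : ℝ) ^ i) ^ 2 * ((i : ℝ) ^ 2 + 1)
        ≤ 8 * B * (P ^ ((1 : ℝ) / 2) * ((2 : ℝ) ^ i) ^ 2 * log ((2 : ℝ) ^ i) ^ 2 / B) := by
      rw [mul_assoc 8 B, mul_div_cancel₀ _ (by positivity : B ≠ 0)]
      nlinarith [mul_le_mul_of_nonneg_left hlog (by positivity : (0 : ℝ) ≤ ((2 : ℝ) ^ i) ^ 2),
        mul_le_mul_of_nonneg_right hsP
          (by positivity : 0 ≤ ((2 : ℝ) ^ i) ^ 2 * log ((2 : ℝ) ^ i) ^ 2)]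
    have hrpow : 0 ≤ P * ((2 : ℝ) ^ i) ^ logb 2 3 := by positivity
    nlinarith [mul_le_mul_of_nonneg_right hBC₀ hcube, mul_le_mul_of_nonneg_left hsq hC₀,
      mul_nonneg (mul_nonneg (by linarith : 0 ≤ 8 * B) hC₀) hrpow]

/-- Parallel cache complexity of the GAP recurrence algorithm:
`Q(n) = 4Q(n/2) + 4(n/2)Q_2D(n/2) + 2Q_MT(n/2)` (encoded on powers of 2 by
`q i = Q(2^i)`) gives `Q(n) = O(n³/(BM) + P^{1/2} n² (log n)²/B + P·n^{log₂3})`. -/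
theorem stmt13 (B M P C : ℝ) (hB : 1 ≤ B) (hM : 1 ≤ M) (hP : 1 ≤ P) (hC : 1 ≤ C)
    (Q2D QMT : ℕ → ℝ)
    (h2D : ∀ n : ℕ, 1 ≤ n → Q2D n ≤ C * ((n : ℝ) ^ 2 / (B * M)
      + P ^ ((1 : ℝ) / 2) * (n : ℝ) * Real.log n / B
      + P * (Real.log n) ^ 2))
    (hMT : ∀ n : ℕ, 1 ≤ n → QMT n ≤ C * ((n : ℝ) ^ 2 / B + P * (Real.log n) ^ 2))
    (q : ℕ → ℝ)
    (hrec : ∀ i : ℕ, q (i + 1) =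
      4 * q i + 4 * (2 : ℝ) ^ i * Q2D (2 ^ i) + 2 * QMT (2 ^ i)) :
    ∃ C' > 0, ∀ i : ℕ,
      q i ≤ C' * (((2 : ℝ) ^ i) ^ 3 / (B * M)
        + P ^ ((1 : ℝ) / 2) * ((2 : ℝ) ^ i) ^ 2 * (Real.log ((2 : ℝ) ^ i)) ^ 2 / B
        + P * ((2 : ℝ) ^ i) ^ (Real.logb 2 3)) := by
  set K := 8 * C * P
  have hK : 0 ≤ K := by positivity
  have hsP : P ^ ((1 : ℝ) / 2) ≤ P := rpow_le_self_of_one_le hP (by norm_num)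
  have hcost : ∀ i : ℕ, 4 * (2 : ℝ) ^ i * Q2D (2 ^ i) + 2 * QMT (2 ^ i)
      ≤ K * (((2 : ℝ) ^ i) ^ 3 / (B * M) + ((2 : ℝ) ^ i) ^ 2 * (i + 1)) := fun i => by
    have h2D := h2D (2 ^ i) Nat.one_le_two_pow
    have hMT := hMT (2 ^ i) Nat.one_le_two_pow
    push_cast at h2D hMT
    exact level_cost_le hB (by linarith) hP (by linarith) hsP
      (log_nonneg (one_le_pow₀ one_le_two)) (log_two_pow_le i) (natCast_le_two_pow i) h2D hMT
  have hq := le_of_le_four_mul_add (q := q) (D := B * M) (by positivity) hK (le_max_right (q 0) K)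
    (le_max_left _ _) (fun i => by linarith [hrec i, hcost i])
  exact ⟨8 * B * max (q 0) K, by positivity, fun i =>
    (hq i).trans (le_target_form hB (by positivity) hP (hK.trans (le_max_right _ _)) i)⟩
end

section
/- Let Q : ℕ → ℝ satisfy Q(n) = 2·Q(n/2) + Q_MT(n/2) + (n/2)·Q_2D(n/2) for n > 1 a power of 2 with Q(1) = O(1), where Q_2D(n) ≤ C·(n²/(BM) + P^{1/2} n (log n)/B + P (log n)²) and Q_MT(n) ≤ C·(n²/B + P (log n)²). Then Q(n) = O(n³/(BM) + P^{1/2} n² (log n)/B + P·n·(log n)²). -/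
/-!
With `n = 2 ^ i`, the function `K · (n³/(BM) + √P·n²·i/B + P·n·i³)` is a supersolution of the
recurrence as soon as `K ≥ C` and `K` covers `q 0`, so it dominates `q` by induction on `i`. The
`P (log n)²` part of the per-level cost is balanced over the `i` levels and so picks up a third
logarithm; since `P·n·i³ ≤ 2√P·√P·n²·i` by `i² ≤ 2n`, it is absorbed into the middle term at the
price of a constant depending on `B` and `P`.
-/

theorem Nat.sq_le_two_mul_two_pow (n : ℕ) : n ^ 2 ≤ 2 * 2 ^ n := by
  induction n with
  | zero => norm_num
  | succ n ih =>
    have := n.lt_two_pow_self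
    rw [pow_succ 2 n]
    nlinarith

theorem Real.log_two_pow_le (i : ℕ) : Real.log (2 ^ i) ≤ i := by
  rw [Real.log_pow]
  exact mul_le_of_le_one_right i.cast_nonneg (Real.log_two_lt_d9.le.trans (by norm_num))

theorem subsolution_le_supersolution {a : ℝ} (ha : 0 ≤ a) {q g f : ℕ → ℝ}
    (hq : ∀ i, q (i + 1) ≤ a * q i + f i) (hg : ∀ i, a * g i + f i ≤ g (i + 1))
    (h0 : q 0 ≤ g 0) (i : ℕ) : q i ≤ g i := by
  induction i with
  | zero => exact h0
  | succ i ih => exact (hq i).trans <| le_trans (by gcongr) (hg i)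

noncomputable def accordionBound (B M s P : ℝ) (i : ℕ) : ℝ :=
  ((2 : ℝ) ^ i) ^ 3 / (B * M) + s * ((2 : ℝ) ^ i) ^ 2 * i / B + P * 2 ^ i * (i : ℝ) ^ 3

theorem accordionBound_succ (B M s P : ℝ) (i : ℕ) :
    accordionBound B M s P (i + 1) = 2 * accordionBound B M s P i
      + (6 * ((2 : ℝ) ^ i) ^ 3 / (B * M) + s * ((2 : ℝ) ^ i) ^ 2 * (2 * i + 4) / B
        + P * 2 ^ i * (6 * (i : ℝ) ^ 2 + 6 * i + 2)) := by
  simp only [accordionBound, pow_succ, Nat.cast_succ]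
  ring

theorem two_mul_accordionBound_add_le {B M s P C K L : ℝ} {i : ℕ} (hB : 0 < B) (hM : 0 < M)
    (hs : 1 ≤ s) (hP : 0 ≤ P) (hC : 0 ≤ C) (hCK : C ≤ K) (hL0 : 0 ≤ L) (hLi : L ≤ i) :
    2 * (K * accordionBound B M s P i) + C * (((2 : ℝ) ^ i) ^ 2 / B + P * L ^ 2)
      + 2 ^ i * (C * (((2 : ℝ) ^ i) ^ 2 / (B * M) + s * 2 ^ i * L / B + P * L ^ 2))
      ≤ K * accordionBound B M s P (i + 1) := by
  rw [accordionBound_succ]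
  set x : ℝ := 2 ^ i
  have hx : 1 ≤ x := one_le_pow₀ one_le_two
  have hi : (0 : ℝ) ≤ i := i.cast_nonneg
  have cubic : C * (x ^ 3 / (B * M)) ≤ 6 * K * (x ^ 3 / (B * M)) :=
    mul_le_mul_of_nonneg_right (by linarith) (by positivity)
  have quadLog : C * L * (s * x ^ 2 / B) ≤ 2 * K * i * (s * x ^ 2 / B) :=
    mul_le_mul_of_nonneg_right (by nlinarith) (by positivity)
  have quad : C * (x ^ 2 / B) ≤ 4 * K * s * (x ^ 2 / B) :=
    mul_le_mul_of_nonneg_right (by nlinarith) (by positivity)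
  have logSq : C * P * L ^ 2 ≤ C * P * (x * i ^ 2) :=
    mul_le_mul_of_nonneg_left ((pow_le_pow_left₀ hL0 hLi 2).trans
      (le_mul_of_one_le_left (sq_nonneg _) hx)) (by positivity)
  have logSq' : x * (C * P * L ^ 2) ≤ x * (C * P * i ^ 2) :=
    mul_le_mul_of_nonneg_left (mul_le_mul_of_nonneg_left
      (pow_le_pow_left₀ hL0 hLi 2) (by positivity)) (by positivity)
  have logSqCoeff : 2 * C * (P * x * i ^ 2) ≤ 6 * K * (P * x * i ^ 2) :=
    mul_le_mul_of_nonneg_right (by linarith) (by positivity)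
  have rest : 0 ≤ K * (P * x * (6 * (i : ℝ) + 2)) := by
    have := hC.trans hCK
    positivity
  linear_combination cubic + quadLog + quad + logSq + logSq' + logSqCoeff + rest

theorem accordionBound_le {B M s P : ℝ} (hB : 0 < B) (hM : 0 < M) (hs : 0 ≤ s) (hP : 0 ≤ P)
    (hPs : P ≤ s ^ 2) (i : ℕ) :
    accordionBound B M s P i ≤ (2 + 4 * s * B) * (((2 : ℝ) ^ i) ^ 3 / (B * M)
      + s * ((2 : ℝ) ^ i) ^ 2 * Real.log (2 ^ i) / B + P * 2 ^ i * Real.log (2 ^ i) ^ 2) := by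
  have hi : (i : ℝ) ≤ 2 * Real.log (2 ^ i) := by
    rw [Real.log_pow]
    nlinarith [Real.log_two_gt_d9, i.cast_nonneg (α := ℝ)]
  have hL : 0 ≤ Real.log ((2 : ℝ) ^ i) := Real.log_nonneg (one_le_pow₀ one_le_two)
  have hiSq : (i : ℝ) ^ 2 ≤ 2 * 2 ^ i := by exact_mod_cast i.sq_le_two_mul_two_pow
  unfold accordionBound
  set x : ℝ := 2 ^ i
  set L := Real.log x
  have linLog : s * x ^ 2 * i / B ≤ 2 * (s * x ^ 2 * L / B) :=
    calc s * x ^ 2 * i / B ≤ s * x ^ 2 * (2 * L) / B := by gcongr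
      _ = 2 * (s * x ^ 2 * L / B) := by ring
  have cubeLog : P * x * i ^ 3 ≤ 2 * s * B * (s * x ^ 2 * i / B) :=
    calc P * x * i ^ 3 = P * x * i * i ^ 2 := by ring
      _ ≤ s ^ 2 * x * i * (2 * x) := by gcongr
      _ = 2 * s * B * (s * x ^ 2 * i / B) := by field_simp
  have hT1 : 0 ≤ x ^ 3 / (B * M) := by positivity
  have hT3 : 0 ≤ P * x * L ^ 2 := by positivity
  have hsB : 0 ≤ s * B := by positivity
  nlinarith

/-- Parallel cache complexity of protein accordion folding:
`Q(n) = 2Q(n/2) + Q_MT(n/2) + (n/2)Q_2D(n/2)` (encoded on powers of 2 by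
`q i = Q(2^i)`) gives `Q(n) = O(n³/(BM) + P^{1/2} n² (log n)/B + P·n·(log n)²)`. -/
theorem stmt15 (B M P C : ℝ) (hB : 1 ≤ B) (hM : 1 ≤ M) (hP : 1 ≤ P) (hC : 1 ≤ C)
    (Q2D QMT : ℕ → ℝ)
    (h2D : ∀ n : ℕ, 1 ≤ n → Q2D n ≤ C * ((n : ℝ) ^ 2 / (B * M)
      + P ^ ((1 : ℝ) / 2) * (n : ℝ) * Real.log n / B
      + P * (Real.log n) ^ 2))
    (hMT : ∀ n : ℕ, 1 ≤ n → QMT n ≤ C * ((n : ℝ) ^ 2 / B + P * (Real.log n) ^ 2))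
    (q : ℕ → ℝ)
    (hrec : ∀ i : ℕ, q (i + 1) =
      2 * q i + QMT (2 ^ i) + (2 : ℝ) ^ i * Q2D (2 ^ i)) :
    ∃ C' > 0, ∀ i : ℕ,
      q i ≤ C' * (((2 : ℝ) ^ i) ^ 3 / (B * M)
        + P ^ ((1 : ℝ) / 2) * ((2 : ℝ) ^ i) ^ 2 * Real.log ((2 : ℝ) ^ i) / B
        + P * (2 : ℝ) ^ i * (Real.log ((2 : ℝ) ^ i)) ^ 2) := by
  set s := P ^ ((1 : ℝ) / 2)
  have hs : 1 ≤ s := Real.one_le_rpow hP (by norm_num)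
  have hsP : s ^ 2 = P := by
    rw [← Real.rpow_natCast, ← Real.rpow_mul (by linarith)]
    norm_num
  have hBM : 0 < B * M := by positivity
  set K := max C (q 0 * (B * M))
  have hCK : C ≤ K := le_max_left _ _
  have hstep (i : ℕ) : 2 * (K * accordionBound B M s P i) + (QMT (2 ^ i) + 2 ^ i * Q2D (2 ^ i))
      ≤ K * accordionBound B M s P (i + 1) := by
    have hMTi := hMT (2 ^ i) Nat.one_le_two_pow
    have h2Di := mul_le_mul_of_nonneg_left (h2D (2 ^ i) Nat.one_le_two_pow)
      (by positivity : (0 : ℝ) ≤ 2 ^ i)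
    push_cast at hMTi h2Di
    have := two_mul_accordionBound_add_le (B := B) (M := M) (P := P) (by linarith) (by linarith)
      hs (by linarith) (by linarith) hCK
      (Real.log_nonneg (one_le_pow₀ one_le_two)) (Real.log_two_pow_le i)
    linarith
  have hbase : q 0 ≤ K * accordionBound B M s P 0 := by
    rw [show accordionBound B M s P 0 = 1 / (B * M) by simp [accordionBound], mul_one_div,
      le_div_iff₀ hBM]
    exact le_max_right _ _
  have hq := subsolution_le_supersolution zero_le_two (fun i ↦ by rw [hrec, add_assoc]) hstep hbase
  refine ⟨K * (2 + 4 * s * B), by positivity, fun i ↦ (hq i).trans ?_⟩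
  rw [mul_assoc]
  gcongr
  exact accordionBound_le (by positivity) (by positivity) (by positivity) (by positivity) hsP.ge i
end

section
/- Let Q : ℕ → ℝ satisfy Q(n) = 4·Q(n/2) + Q_2D(n²) for n > 1 a power of 2 with Q(1) = O(1), where Q_2D(s) ≤ C·(s²/(BM) + P^{1/2} s (log s)/B + P (log s)²). Then Q(n) = O(n⁴/(BM) + P^{1/2} n² (log n)²/B + P·n^{log₂ 3}). -/
set_option maxHeartbeats 4000000


/-- Parallel cache complexity of the RNA recurrence algorithm:
`Q(n) = 4Q(n/2) + Q_2D(n²)` (encoded on powers of 2 by `q i = Q(2^i)`, so the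
2d-grid call at size `n = 2^(i+1)` has argument `n² = 2^(2(i+1))`) gives
`Q(n) = O(n⁴/(BM) + P^{1/2} n² (log n)²/B + P·n^{log₂3})`. -/
theorem stmt16 (B M P C : ℝ) (hB : 1 ≤ B) (hM : 1 ≤ M) (hP : 1 ≤ P) (hC : 1 ≤ C)
    (Q2D : ℕ → ℝ)
    (h2D : ∀ s : ℕ, 1 ≤ s → Q2D s ≤ C * ((s : ℝ) ^ 2 / (B * M)
      + P ^ ((1 : ℝ) / 2) * (s : ℝ) * Real.log s / B
      + P * (Real.log s) ^ 2))
    (q : ℕ → ℝ)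
    (hrec : ∀ i : ℕ, q (i + 1) = 4 * q i + Q2D (2 ^ (2 * (i + 1)))) :
    ∃ C' > 0, ∀ i : ℕ,
      q i ≤ C' * (((2 : ℝ) ^ i) ^ 4 / (B * M)
        + P ^ ((1 : ℝ) / 2) * ((2 : ℝ) ^ i) ^ 2 * (Real.log ((2 : ℝ) ^ i)) ^ 2 / B
        + P * ((2 : ℝ) ^ i) ^ (Real.logb 2 3)) := by
  have hBM : (0:ℝ) < B * M := by positivity
  have hP0 : (0:ℝ) < P := by linarith
  have hL1 : (1:ℝ)/2 ≤ Real.log 2 := by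
    have := Real.log_two_gt_d9; linarith
  have hL2 : Real.log 2 ≤ 1 := by
    have := Real.log_two_lt_d9; linarith
  have hL0 : (0:ℝ) < Real.log 2 := by linarith
  have hpe : (0:ℝ) ≤ P ^ ((1:ℝ)/2) := Real.rpow_nonneg (by linarith) _
  obtain ⟨D, hDdef⟩ : ∃ D : ℝ, D = |q 0| * (B*M) + 4*C := ⟨_, rfl⟩
  have hD0 : (0:ℝ) < D := by
    have := mul_nonneg (abs_nonneg (q 0)) hBM.le
    rw [hDdef]; nlinarith
  have hD4 : 4*C ≤ D := by
    have := mul_nonneg (abs_nonneg (q 0)) hBM.le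
    rw [hDdef]; linarith
  -- main induction
  have key : ∀ i : ℕ, q i ≤ D * ((16:ℝ)^i/(B*M)
      + P ^ ((1:ℝ)/2) * (4:ℝ)^i * ((i:ℝ)*Real.log 2)^2 / B
      + P * (4*(4:ℝ)^i - ((i:ℝ)+2)^2)) := by
    intro i
    induction i with
    | zero =>
      have h0 : q 0 ≤ D / (B*M) := by
        have he : D / (B*M) = |q 0| + 4*C/(B*M) := by
          rw [hDdef]; field_simp
        have h4 : (0:ℝ) ≤ 4*C/(B*M) := by positivity
        calc q 0 ≤ |q 0| := le_abs_self _
          _ ≤ D/(B*M) := by rw [he]; linarith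
      have he2 : D * ((16:ℝ)^0/(B*M)
          + P ^ ((1:ℝ)/2) * (4:ℝ)^0 * (((0:ℕ):ℝ)*Real.log 2)^2 / B
          + P * (4*(4:ℝ)^0 - (((0:ℕ):ℝ)+2)^2)) = D / (B*M) := by
        push_cast; ring
      rw [he2]; exact h0
    | succ i ih =>
      rw [hrec i]
      have hs : 1 ≤ 2^(2*(i+1)) := Nat.one_le_two_pow
      have h2 := h2D (2^(2*(i+1))) hs
      have hcast : ((2^(2*(i+1)) : ℕ) : ℝ) = (4:ℝ)^(i+1) := by
        push_cast
        rw [pow_mul]; norm_num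
      have hlog : Real.log ((2^(2*(i+1)) : ℕ) : ℝ) = (2*((i:ℝ)+1)) * Real.log 2 := by
        have hc2 : ((2^(2*(i+1)) : ℕ) : ℝ) = (2:ℝ)^(2*(i+1)) := by push_cast; ring
        rw [hc2, Real.log_pow]; push_cast; ring
      rw [hlog, hcast] at h2
      have h16sq : ((4:ℝ)^(i+1))^2 = (16:ℝ)^(i+1) := by
        rw [← pow_mul, show (16:ℝ) = 4^2 by norm_num, ← pow_mul, mul_comm]
      have e16 : (16:ℝ)^(i+1) = (16:ℝ)^i*16 := pow_succ 16 i
      have h4s : (4:ℝ)^(i+1) = (4:ℝ)^i*4 := pow_succ 4 i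
      rw [h16sq, e16, h4s] at h2
      -- now h2 is entirely in terms of 16^i, 4^i
      have hn0 : (0:ℝ) ≤ (i:ℝ) := Nat.cast_nonneg i
      have h16p : (0:ℝ) < (16:ℝ)^i := by positivity
      have h4p : (0:ℝ) < (4:ℝ)^i := by positivity
      -- term A
      have hA : 4*(D*((16:ℝ)^i/(B*M))) + C*(((16:ℝ)^i*16)/(B*M))
          ≤ D*(((16:ℝ)^i*16)/(B*M)) := by
        have hnum : 4*D*(16:ℝ)^i + C*((16:ℝ)^i*16) ≤ D*((16:ℝ)^i*16) := by
          nlinarith [mul_nonneg (show (0:ℝ) ≤ 12*D - 16*C by linarith) h16p.le]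
        calc 4*(D*((16:ℝ)^i/(B*M))) + C*(((16:ℝ)^i*16)/(B*M))
            = (4*D*(16:ℝ)^i + C*((16:ℝ)^i*16))/(B*M) := by ring
          _ ≤ (D*((16:ℝ)^i*16))/(B*M) := by gcongr
          _ = D*(((16:ℝ)^i*16)/(B*M)) := by ring
      -- term B
      have hDL : 2*C ≤ D*Real.log 2 := by
        nlinarith [mul_nonneg (sub_nonneg.mpr hD4) hL0.le,
          mul_nonneg (show (0:ℝ) ≤ 2*C by linarith) (show (0:ℝ) ≤ 2*Real.log 2 - 1 by linarith)]
      have core : 8*C*(((i:ℝ)+1)*Real.log 2) ≤ 4*D*(Real.log 2)^2*(2*(i:ℝ)+1) := by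
        nlinarith [mul_nonneg (mul_nonneg hL0.le (sub_nonneg.mpr hDL))
            (show (0:ℝ) ≤ 2*(i:ℝ)+1 by linarith),
          mul_nonneg (mul_nonneg (show (0:ℝ) ≤ 8*C by linarith) hL0.le) hn0]
      have hB' : 4*(D*(P ^ ((1:ℝ)/2) * (4:ℝ)^i * ((i:ℝ)*Real.log 2)^2 / B))
          + C*(P ^ ((1:ℝ)/2) * ((4:ℝ)^i*4) * (2*((i:ℝ)+1)*Real.log 2)/B)
          ≤ D*(P ^ ((1:ℝ)/2) * ((4:ℝ)^i*4) * (((i:ℝ)+1)*Real.log 2)^2 / B) := by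
        have hinner : 4*D*(4:ℝ)^i*((i:ℝ)*Real.log 2)^2
            + C*((4:ℝ)^i*4)*(2*((i:ℝ)+1)*Real.log 2)
            ≤ D*((4:ℝ)^i*4)*(((i:ℝ)+1)*Real.log 2)^2 := by
          nlinarith [mul_nonneg (show (0:ℝ) ≤ 4*D*(Real.log 2)^2*(2*(i:ℝ)+1)
            - 8*C*(((i:ℝ)+1)*Real.log 2) by linarith) h4p.le]
        calc 4*(D*(P ^ ((1:ℝ)/2) * (4:ℝ)^i * ((i:ℝ)*Real.log 2)^2 / B))
            + C*(P ^ ((1:ℝ)/2) * ((4:ℝ)^i*4) * (2*((i:ℝ)+1)*Real.log 2)/B)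
            = P ^ ((1:ℝ)/2) * (4*D*(4:ℝ)^i*((i:ℝ)*Real.log 2)^2
                + C*((4:ℝ)^i*4)*(2*((i:ℝ)+1)*Real.log 2)) / B := by ring
          _ ≤ P ^ ((1:ℝ)/2) * (D*((4:ℝ)^i*4)*(((i:ℝ)+1)*Real.log 2)^2) / B := by gcongr
          _ = D*(P ^ ((1:ℝ)/2) * ((4:ℝ)^i*4) * (((i:ℝ)+1)*Real.log 2)^2 / B) := by ring
      -- term C
      have h4CL : 4*C*(Real.log 2)^2 ≤ D := by
        nlinarith [mul_nonneg (show (0:ℝ) ≤ 4*C by linarith)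
          (show (0:ℝ) ≤ 1 - (Real.log 2)^2 by nlinarith)]
      have hbr : 0 ≤ D*(4*((i:ℝ)+2)^2 - ((i:ℝ)+3)^2) - 4*C*(Real.log 2)^2*((i:ℝ)+1)^2 := by
        nlinarith [mul_nonneg (sub_nonneg.mpr h4CL) (sq_nonneg ((i:ℝ)+1)),
          mul_nonneg hD0.le (show (0:ℝ) ≤ 2*(i:ℝ)^2+8*(i:ℝ)+6 by nlinarith)]
      have hC2 : 4*(D*(P*(4*(4:ℝ)^i - ((i:ℝ)+2)^2))) + C*(P*(2*((i:ℝ)+1)*Real.log 2)^2)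
          ≤ D*(P*(4*((4:ℝ)^i*4) - ((i:ℝ)+3)^2)) := by
        nlinarith [mul_nonneg hP0.le hbr]
      calc 4 * q i + Q2D (2^(2*(i+1)))
          ≤ D*(((16:ℝ)^i*16)/(B*M))
            + D*(P ^ ((1:ℝ)/2) * ((4:ℝ)^i*4) * (((i:ℝ)+1)*Real.log 2)^2 / B)
            + D*(P*(4*((4:ℝ)^i*4) - ((i:ℝ)+3)^2)) := by
            linarith [ih, h2, hA, hB', hC2]
        _ = D * ((16:ℝ)^(i+1)/(B*M)
            + P ^ ((1:ℝ)/2) * (4:ℝ)^(i+1) * (((i+1:ℕ):ℝ)*Real.log 2)^2 / B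
            + P * (4*(4:ℝ)^(i+1) - (((i+1:ℕ):ℝ)+2)^2)) := by
            push_cast; ring
  -- conclude
  refine ⟨5*D*P*B*M, ?_, ?_⟩
  · positivity
  · intro i
    have hk := key i
    have e1 : ((2:ℝ)^i)^4 = (16:ℝ)^i := by
      rw [← pow_mul, show (16:ℝ) = 2^4 by norm_num, ← pow_mul, mul_comm]
    have e2 : ((2:ℝ)^i)^2 = (4:ℝ)^i := by
      rw [← pow_mul, show (4:ℝ) = 2^2 by norm_num, ← pow_mul, mul_comm]
    have e3 : Real.log ((2:ℝ)^i) = (i:ℝ) * Real.log 2 := by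
      rw [Real.log_pow]
    have e4 : ((2:ℝ)^i) ^ Real.logb 2 3 = (3:ℝ)^i := by
      have h1 : ((2:ℝ)^i) ^ Real.logb 2 3 = ((2:ℝ) ^ Real.logb 2 3) ^ i := by
        rw [← Real.rpow_natCast (2:ℝ) i, ← Real.rpow_mul (by norm_num), mul_comm,
          Real.rpow_mul (by norm_num), Real.rpow_natCast]
      rw [h1, Real.rpow_logb (by norm_num) (by norm_num) (by norm_num)]
    rw [e1, e2, e3, e4]
    have h3i : (0:ℝ) < (3:ℝ)^i := by positivity
    have h4p : (0:ℝ) < (4:ℝ)^i := by positivity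
    have h16p : (0:ℝ) < (16:ℝ)^i := by positivity
    have h4le : (4:ℝ)^i ≤ B*M*(3:ℝ)^i + (16:ℝ)^i/(B*M) := by
      rcases le_or_gt ((4:ℝ)^i) (B*M*(3:ℝ)^i) with h | h
      · have : (0:ℝ) ≤ (16:ℝ)^i/(B*M) := by positivity
        linarith
      · have h3 : (1:ℝ) ≤ (3:ℝ)^i := one_le_pow₀ (by norm_num)
        have hBM4 : B*M ≤ (4:ℝ)^i := by
          nlinarith [mul_nonneg hBM.le (show (0:ℝ) ≤ (3:ℝ)^i - 1 by linarith)]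
        have h16 : (4:ℝ)^i ≤ (16:ℝ)^i/(B*M) := by
          rw [le_div_iff₀ hBM]
          have h16e : (16:ℝ)^i = (4:ℝ)^i * (4:ℝ)^i := by
            rw [show (16:ℝ) = 4*4 by norm_num, mul_pow]
          nlinarith [mul_le_mul_of_nonneg_left hBM4 h4p.le]
        have : (0:ℝ) ≤ B*M*(3:ℝ)^i := by positivity
        linarith
    have step2 : D*P*(4*(4:ℝ)^i) ≤ 4*D*P*(B*M*(3:ℝ)^i + (16:ℝ)^i/(B*M)) := by
      have := mul_le_mul_of_nonneg_left h4le (show (0:ℝ) ≤ 4*D*P by positivity)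
      linarith
    have hdrop : D*(P*(4*(4:ℝ)^i - ((i:ℝ)+2)^2)) ≤ D*P*(4*(4:ℝ)^i) := by
      nlinarith [mul_nonneg (mul_nonneg hD0.le hP0.le) (sq_nonneg ((i:ℝ)+2))]
    have hu : (0:ℝ) ≤ (16:ℝ)^i/(B*M) := by positivity
    have hv : (0:ℝ) ≤ P ^ ((1:ℝ)/2) * (4:ℝ)^i * ((i:ℝ)*Real.log 2)^2 / B := by positivity
    have hDP : (0:ℝ) ≤ D*P := (mul_pos hD0 hP0).le
    have hcu : (0:ℝ) ≤ 5*D*P*B*M - D - 4*D*P := by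
      nlinarith [mul_nonneg hD0.le (sub_nonneg.mpr hP),
        mul_nonneg hDP (show (0:ℝ) ≤ B*M - 1 by nlinarith)]
    have hcv : (0:ℝ) ≤ 5*D*P*B*M - D := by linarith
    have hcw : (0:ℝ) ≤ 5*D*P*B*M*P - 4*D*P*(B*M) := by
      nlinarith [mul_nonneg (mul_nonneg hDP hBM.le) (show (0:ℝ) ≤ 5*P - 4 by linarith)]
    nlinarith [hk, hdrop, step2, mul_nonneg hcu hu, mul_nonneg hcv hv,
      mul_nonneg hcw h3i.le]
end
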